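/- arXiv:2407.16671 — 6 statements merged into one kernel-verified Lean document; each statement's English description precedes it below -/
import Mathlib

section
/- Let X be a strictly convex finite-dimensional real normed space and f : X → X a real analytic nonexpansive map. If Fix(f) is nonempty, then Fix(f) is an affine subspace of X. -/
/-!
By strict convexity, a nonexpansive map fixing `x` and `y` fixes every point of the segment
`[x, y]`: such a point `z` is mapped to a point `f z` with `‖x - f z‖ ≤ ‖x - z‖` and
`‖f z - y‖ ≤ ‖z - y‖`, and `z` is the only such point. Hence `Fix(f)` is convex, so in finite
dimension, if nonempty, it has nonempty interior relative to its affine span. The analytic map `f`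
agrees with the identity on that relatively open set, hence on the whole affine span by the
identity principle.
-/

open Set Function AffineMap Filter Topology

section FixedPoints

variable {E : Type*} [NormedAddCommGroup E] [NormedSpace ℝ E] [StrictConvexSpace ℝ E]
  {f : E → E}

theorem LipschitzWith.isFixedPt_lineMap (hf : LipschitzWith 1 f) {x y : E} (hx : IsFixedPt f x)
    (hy : IsFixedPt f y) {t : ℝ} (ht₀ : 0 ≤ t) (ht₁ : t ≤ 1) :
    IsFixedPt f (lineMap x y t) := by
  set z := lineMap x y t
  have hxz : dist x (f z) ≤ t * dist x y := by
    calc dist x (f z) = dist (f x) (f z) := by rw [hx.eq]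
      _ ≤ dist x z := by simpa using hf.dist_le_mul x z
      _ = t * dist x y := by rw [dist_comm, dist_lineMap_left, Real.norm_of_nonneg ht₀]
  have hzy : dist (f z) y ≤ (1 - t) * dist x y := by
    calc dist (f z) y = dist (f z) (f y) := by rw [hy.eq]
      _ ≤ dist z y := by simpa using hf.dist_le_mul z y
      _ = (1 - t) * dist x y := by
        rw [dist_lineMap_right, Real.norm_of_nonneg (sub_nonneg.2 ht₁)]
  have htri := dist_triangle x (f z) y
  exact eq_lineMap_of_dist_eq_mul_of_dist_eq_mul (by linarith) (by linarith)

theorem LipschitzWith.convex_fixedPoints (hf : LipschitzWith 1 f) : Convex ℝ (fixedPoints f) := by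
  refine convex_iff_segment_subset.2 fun x hx y hy => ?_
  rw [segment_eq_image_lineMap]
  rintro _ ⟨t, ⟨ht₀, ht₁⟩, rfl⟩
  exact hf.isFixedPt_lineMap hx hy ht₀ ht₁

end FixedPoints

section Analytic

variable {E F : Type*} [NormedAddCommGroup E] [NormedSpace ℝ E] [FiniteDimensional ℝ E]
  [NormedAddCommGroup F] [NormedSpace ℝ F] {f g : E → F} {s : Set E}

theorem Convex.eqOn_affineSpan_of_analyticOnNhd (hs : Convex ℝ s)
    (hf : AnalyticOnNhd ℝ f (affineSpan ℝ s)) (hg : AnalyticOnNhd ℝ g (affineSpan ℝ s))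
    (hfg : EqOn f g s) : EqOn f g (affineSpan ℝ s) := by
  rcases s.eq_empty_or_nonempty with rfl | hne
  · simp
  set W := affineSpan ℝ s
  obtain ⟨_, ⟨p, hp, rfl⟩⟩ := hne.intrinsicInterior hs
  -- `θ` parametrizes `W` by its direction, centred at a point `p` of the intrinsic interior of
  -- `s`, so `f ∘ θ` and `g ∘ θ` agree near `0` and the identity principle applies on `W.direction`.
  let θ : W.direction → E := fun v => (v : E) + p
  have hθ : ∀ v, θ v ∈ W := fun v => W.vadd_mem_of_mem_direction v.2 p.2
  have hθ_an : ∀ v, AnalyticAt ℝ θ v := fun v =>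
    (W.direction.subtypeL.analyticAt v).add analyticAt_const
  have hθ_cont : Continuous fun v : W.direction => (⟨θ v, hθ v⟩ : W) :=
    (Continuous.add continuous_subtype_val continuous_const).subtype_mk _
  have hloc : f ∘ θ =ᶠ[𝓝 0] g ∘ θ := by
    have : Tendsto (fun v : W.direction => (⟨θ v, hθ v⟩ : W)) (𝓝 0) (𝓝 p) := by
      simpa [θ] using hθ_cont.tendsto 0
    filter_upwards [this (isOpen_interior.mem_nhds hp)] with v hv
    exact hfg (interior_subset hv : _ ∈ Subtype.val ⁻¹' s)
  have hglob := AnalyticOnNhd.eqOn_of_preconnected_of_eventuallyEq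
    (fun v _ => (hf _ (hθ v)).comp (hθ_an v)) (fun v _ => (hg _ (hθ v)).comp (hθ_an v))
    isPreconnected_univ (mem_univ 0) hloc
  intro x hx
  simpa [θ] using hglob (mem_univ ⟨x - p, W.vsub_mem_direction hx p.2⟩)

end Analytic

theorem stmt_2_general {X : Type*} [NormedAddCommGroup X] [NormedSpace ℝ X]
    [FiniteDimensional ℝ X] [StrictConvexSpace ℝ X]
    (f : X → X) (hf_an : ∀ x : X, AnalyticAt ℝ f x)
    (hf : ∀ u v : X, ‖f u - f v‖ ≤ ‖u - v‖) :
    ∃ W : AffineSubspace ℝ X, (W : Set X) = Function.fixedPoints f := by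
  have hlip : LipschitzWith 1 f := .mk_one fun u v => by simpa only [dist_eq_norm] using hf u v
  refine ⟨affineSpan ℝ (fixedPoints f), (subset_affineSpan ℝ _).antisymm' fun x hx => ?_⟩
  exact hlip.convex_fixedPoints.eqOn_affineSpan_of_analyticOnNhd (fun x _ => hf_an x)
    analyticOnNhd_id (fun x hx => hx) hx

theorem stmt_2 {X : Type*} [NormedAddCommGroup X] [NormedSpace ℝ X]
    [FiniteDimensional ℝ X] [StrictConvexSpace ℝ X]
    (f : X → X) (hf_an : ∀ x : X, AnalyticAt ℝ f x)
    (hf : ∀ u v : X, ‖f u - f v‖ ≤ ‖u - v‖)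
    (hne : (Function.fixedPoints f).Nonempty) :
    ∃ W : AffineSubspace ℝ X, (W : Set X) = Function.fixedPoints f :=
  stmt_2_general f hf_an hf
end

section
/- Let X be a finite-dimensional real normed space whose dual unit ball has finitely many extreme points (a polyhedral norm). For every x ∈ X there exists ε > 0 such that for all y with ‖y‖ ≤ ε, the duality set J(x+y) is contained in J(x), where J(z) = {φ in the dual unit ball : φ(z) = ‖z‖}. -/
/-!
`J z` is the face of the dual unit ball `B` exposed by evaluation at `z`, so its extreme points
are extreme points of `B`. There are finitely many of those, and each one that fails to norm `x`
still fails to norm `x + y` for `y` small, by continuity. Hence for small `y` every extreme point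
of the compact convex set `J (x + y)` lies in the closed convex set `J x`, and Krein–Milman
gives `J (x + y) ⊆ J x`.
-/

open Metric Filter Topology

/-- The duality map: `J z` is the set of dual-unit-ball functionals attaining the norm at `z`. -/
def dualityMap {X : Type*} [NormedAddCommGroup X] [NormedSpace ℝ X] (z : X) :
    Set (X →L[ℝ] ℝ) := {φ | ‖φ‖ ≤ 1 ∧ φ z = ‖z‖}

theorem IsCompact.subset_of_extremePoints_subset {E : Type*} [AddCommGroup E] [Module ℝ E]
    [TopologicalSpace E] [T2Space E] [IsTopologicalAddGroup E] [ContinuousSMul ℝ E]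
    [LocallyConvexSpace ℝ E] {K C : Set E} (hK : IsCompact K) (hKconv : Convex ℝ K)
    (hC : IsClosed C) (hCconv : Convex ℝ C) (hKC : K.extremePoints ℝ ⊆ C) : K ⊆ C := by
  rw [← closure_convexHull_extremePoints hK hKconv]
  exact closure_minimal (convexHull_min hKC hCconv) hC

theorem setOf_norm_le_eq_closedBall {E : Type*} [SeminormedAddGroup E] (r : ℝ) :
    {v : E | ‖v‖ ≤ r} = closedBall 0 r := by
  ext; simp

section DualityMap

variable {X : Type*} [NormedAddCommGroup X] [NormedSpace ℝ X]

theorem ContinuousLinearMap.apply_le_norm_of_opNorm_le_one {φ : X →L[ℝ] ℝ} (hφ : ‖φ‖ ≤ 1)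
    (z : X) : φ z ≤ ‖z‖ :=
  (le_abs_self _).trans <| (φ.le_of_opNorm_le hφ z).trans_eq (one_mul _)

theorem isExposed_dualityMap (z : X) :
    IsExposed ℝ {φ : X →L[ℝ] ℝ | ‖φ‖ ≤ 1} (dualityMap z) := by
  rintro ⟨φ₀, hφ₀⟩
  refine ⟨ContinuousLinearMap.apply ℝ ℝ z, Set.ext fun ψ => ⟨?_, ?_⟩⟩
  · rintro ⟨hψ, hψz⟩
    exact ⟨hψ, fun φ hφ => hψz ▸ φ.apply_le_norm_of_opNorm_le_one hφ z⟩
  · rintro ⟨hψ, hmax⟩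
    exact ⟨hψ, (ψ.apply_le_norm_of_opNorm_le_one hψ z).antisymm (hφ₀.2 ▸ hmax φ₀ hφ₀.1)⟩

theorem isClosed_dualityMap (z : X) : IsClosed (dualityMap z) :=
  (isExposed_dualityMap z).isClosed (isClosed_le continuous_norm continuous_const)

theorem convex_dualityMap (z : X) : Convex ℝ (dualityMap z) :=
  (isExposed_dualityMap z).convex <| by
    rw [setOf_norm_le_eq_closedBall]; exact convex_closedBall _ _

theorem isCompact_dualityMap [FiniteDimensional ℝ X] (z : X) : IsCompact (dualityMap z) :=
  (isExposed_dualityMap z).isCompact <| by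
    rw [setOf_norm_le_eq_closedBall]; exact isCompact_closedBall _ _

theorem extremePoints_dualityMap (z : X) :
    (dualityMap z).extremePoints ℝ =
      dualityMap z ∩ {φ : X →L[ℝ] ℝ | ‖φ‖ ≤ 1}.extremePoints ℝ :=
  (isExposed_dualityMap z).isExtreme.extremePoints_eq

theorem Set.Finite.eventually_apply_eq_norm_of_apply_add_eq_norm {E : Set (X →L[ℝ] ℝ)}
    (hE : E.Finite) (x : X) : ∀ᶠ y in 𝓝 0, ∀ e ∈ E, e (x + y) = ‖x + y‖ → e x = ‖x‖ := by
  refine hE.eventually_all.2 fun e _ => ?_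
  by_cases hex : e x = ‖x‖
  · exact .of_forall fun _ _ => hex
  have hcont : ContinuousAt (fun y => e (x + y) - ‖x + y‖) 0 := by fun_prop
  filter_upwards [hcont.eventually_ne (by simpa using sub_ne_zero.2 hex)] with y hy hxy
  exact absurd (sub_eq_zero.2 hxy) hy

end DualityMap

theorem stmt_4 {X : Type*} [NormedAddCommGroup X] [NormedSpace ℝ X]
    [FiniteDimensional ℝ X]
    (hpoly : (Set.extremePoints ℝ {φ : X →L[ℝ] ℝ | ‖φ‖ ≤ 1}).Finite) :
    ∀ x : X, ∃ ε > 0, ∀ y : X, ‖y‖ ≤ ε → dualityMap (x + y) ⊆ dualityMap x := by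
  intro x
  obtain ⟨ε, hε, hstable⟩ := nhds_basis_closedBall.eventually_iff.1
    (hpoly.eventually_apply_eq_norm_of_apply_add_eq_norm x)
  refine ⟨ε, hε, fun y hy => ?_⟩
  refine (isCompact_dualityMap (x + y)).subset_of_extremePoints_subset
    (convex_dualityMap _) (isClosed_dualityMap x) (convex_dualityMap x) ?_
  rw [extremePoints_dualityMap]
  rintro e ⟨⟨he, hexy⟩, hext⟩
  exact ⟨he, hstable (mem_closedBall_zero_iff.2 hy) e hext hexy⟩
end

section
/- Let X be a polyhedral normed space, f : X → X real analytic and nonexpansive, and E ⊆ B_{X*}. Define S_E(f) = {x : φ(f(x)) = φ(x) for all φ ∈ E} and L_E = {x : φ(x) = ψ(x) for all φ, ψ ∈ E}. If there exist v, w ∈ S_E(f) with J(v−w) = E, then w + L_E ⊆ S_E(f). -/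
/-!
Put `z = (v - w) / 2`. Since the dual ball has finitely many extreme points, the norm is a
maximum of finitely many functionals, and those not in `J z` stay strictly below `‖z‖` near `z`.
As every `ψ ∈ E = J z` takes one value on `x - z` when `x ∈ L_E`, the norm is affine near `z`
along that direction, so the points `w + z + t (x - z)` with `t` small lie on a metric segment
from `w` to `v`. On such points nonexpansiveness squeezes `ψ ∘ f` to `ψ` for every `ψ ∈ E`, and
analyticity of `t ↦ φ (f (w + z + t (x - z))) - φ (w + z + t (x - z))` carries this to `t = 1`.
-/

open Set Filter Topology

section

variable {X : Type*} [NormedAddCommGroup X] [NormedSpace ℝ X]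

lemma apply_le_norm_of_norm_le_one {φ : X →L[ℝ] ℝ} (hφ : ‖φ‖ ≤ 1) (u : X) : φ u ≤ ‖u‖ :=
  (le_abs_self _).trans (by simpa using φ.le_of_opNorm_le hφ u)

lemma dualityMap_smul {r : ℝ} (hr : 0 < r) (z : X) : dualityMap (r • z) = dualityMap z := by
  ext φ
  simp only [dualityMap, mem_ofPred_eq, map_smul, smul_eq_mul, norm_smul,
    Real.norm_of_nonneg hr.le, mul_right_inj' hr.ne']

lemma apply_map_eq_apply_of_norm_add_norm_eq {f : X → X}
    (hf : ∀ u v : X, ‖f u - f v‖ ≤ ‖u - v‖) {v w x : X} {ψ : X →L[ℝ] ℝ}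
    (hψ : ψ ∈ dualityMap (v - w)) (hv : ψ (f v) = ψ v) (hw : ψ (f w) = ψ w)
    (hx : ‖v - x‖ + ‖x - w‖ = ‖v - w‖) : ψ (f x) = ψ x := by
  have hfv : ψ v - ψ (f x) ≤ ‖v - x‖ := by
    rw [← hv, ← map_sub]; exact (apply_le_norm_of_norm_le_one hψ.1 _).trans (hf _ _)
  have hfw : ψ (f x) - ψ w ≤ ‖x - w‖ := by
    rw [← hw, ← map_sub]; exact (apply_le_norm_of_norm_le_one hψ.1 _).trans (hf _ _)
  have hxv : ψ v - ψ x ≤ ‖v - x‖ := by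
    rw [← map_sub]; exact apply_le_norm_of_norm_le_one hψ.1 _
  have hxw : ψ x - ψ w ≤ ‖x - w‖ := by
    rw [← map_sub]; exact apply_le_norm_of_norm_le_one hψ.1 _
  have hvw : ψ v - ψ w = ‖v - w‖ := by rw [← map_sub]; exact hψ.2
  linarith

variable [FiniteDimensional ℝ X]

lemma exists_mem_extremePoints_apply_eq_norm (u : X) :
    ∃ p ∈ extremePoints ℝ {φ : X →L[ℝ] ℝ | ‖φ‖ ≤ 1}, p u = ‖u‖ := by
  set ball := {φ : X →L[ℝ] ℝ | ‖φ‖ ≤ 1}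
  set face := (ContinuousLinearMap.apply ℝ ℝ u).toExposed ball
  have hexposed : IsExposed ℝ ball face := ContinuousLinearMap.toExposed.isExposed
  have hball : IsCompact ball := by
    rw [show ball = Metric.closedBall 0 1 by ext φ; simp [ball]]
    exact isCompact_closedBall 0 1
  obtain ⟨φ₀, hφ₀, hφ₀u⟩ := exists_dual_vector'' ℝ u
  have hφ₀face : φ₀ ∈ face :=
    ⟨hφ₀, fun ψ hψ => by simpa [hφ₀u] using apply_le_norm_of_norm_le_one hψ u⟩
  obtain ⟨p, hp⟩ := (hexposed.isCompact hball).extremePoints_nonempty ⟨φ₀, hφ₀face⟩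
  have hpface : p ∈ face := extremePoints_subset hp
  refine ⟨p, hexposed.isExtreme.extremePoints_subset_extremePoints hp, ?_⟩
  refine le_antisymm (apply_le_norm_of_norm_le_one hpface.1 u) ?_
  simpa [hφ₀u] using hpface.2 φ₀ hφ₀

lemma eventually_norm_add_smul_eq
    (hpoly : (extremePoints ℝ {φ : X →L[ℝ] ℝ | ‖φ‖ ≤ 1}).Finite)
    {z y : X} {c : ℝ} (hc : ∀ φ ∈ dualityMap z, φ y = c) :
    ∀ᶠ t in 𝓝 (0 : ℝ), ‖z + t • y‖ = ‖z‖ + t * c := by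
  have hline : ∀ (p : X →L[ℝ] ℝ) (t : ℝ), p (z + t • y) = p z + t * p y := by
    intro p t; rw [map_add, map_smul, smul_eq_mul]
  have hbound : ∀ p ∈ extremePoints ℝ {φ : X →L[ℝ] ℝ | ‖φ‖ ≤ 1},
      ∀ᶠ t in 𝓝 (0 : ℝ), p (z + t • y) ≤ ‖z‖ + t * c := by
    intro p hp
    have hp1 : p ∈ {φ : X →L[ℝ] ℝ | ‖φ‖ ≤ 1} := extremePoints_subset hp
    by_cases hpJ : p z = ‖z‖
    · exact Eventually.of_forall fun t => by rw [hline, hpJ, hc p ⟨hp1, hpJ⟩]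
    · have hlt : p z < ‖z‖ := (apply_le_norm_of_norm_le_one hp1 z).lt_of_ne hpJ
      have hcont : Tendsto (fun t : ℝ => p z + t * p y - t * c) (𝓝 0) (𝓝 (p z)) :=
        (by fun_prop : Continuous fun t : ℝ => p z + t * p y - t * c).tendsto' 0 _ (by simp)
      filter_upwards [hcont.eventually (eventually_lt_nhds hlt)] with t ht
      rw [hline]
      linarith
  filter_upwards [hpoly.eventually_all.2 hbound] with t ht
  obtain ⟨q, hq, hqt⟩ := exists_mem_extremePoints_apply_eq_norm (z + t • y)
  obtain ⟨p, hp, hpz⟩ := exists_mem_extremePoints_apply_eq_norm z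
  have hp1 : p ∈ {φ : X →L[ℝ] ℝ | ‖φ‖ ≤ 1} := extremePoints_subset hp
  have hpJ : p ∈ dualityMap z := ⟨hp1, hpz⟩
  refine le_antisymm (hqt ▸ ht q hq) ?_
  calc ‖z‖ + t * c = p (z + t • y) := by rw [hline, hpz, hc p hpJ]
    _ ≤ ‖z + t • y‖ := apply_le_norm_of_norm_le_one hpJ.1 _

lemma eventually_norm_sub_add_norm_sub_eq
    (hpoly : (extremePoints ℝ {φ : X →L[ℝ] ℝ | ‖φ‖ ≤ 1}).Finite)
    {v w y : X} {c : ℝ} (hc : ∀ φ ∈ dualityMap (v - w), φ y = c) :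
    ∀ᶠ t in 𝓝 (0 : ℝ), ‖v - (midpoint ℝ w v + t • y)‖ + ‖midpoint ℝ w v + t • y - w‖
      = ‖v - w‖ := by
  set z : X := (⅟2 : ℝ) • (v - w)
  have hJ : dualityMap z = dualityMap (v - w) := dualityMap_smul (by norm_num) _
  have hz : ‖v - w‖ = 2 * ‖z‖ := by
    rw [norm_smul, invOf_eq_inv, norm_inv, Real.norm_two, mul_inv_cancel_left₀ two_ne_zero]
  have hnear := eventually_norm_add_smul_eq hpoly (hJ ▸ hc)
  have hnear_neg := (continuous_neg.tendsto' (0 : ℝ) 0 neg_zero).eventually hnear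
  filter_upwards [hnear, hnear_neg] with t hpos hneg
  have hleft : v - (midpoint ℝ w v + t • y) = z + (-t) • y := by
    rw [← sub_sub, right_sub_midpoint, neg_smul, ← sub_eq_add_neg]
  have hright : midpoint ℝ w v + t • y - w = z + t • y := by
    rw [add_sub_right_comm, midpoint_sub_left]
  rw [hleft, hright, hpos, hneg, hz]
  ring

end

theorem stmt_6_general {X : Type*} [NormedAddCommGroup X] [NormedSpace ℝ X]
    [FiniteDimensional ℝ X]
    (hpoly : (Set.extremePoints ℝ {φ : X →L[ℝ] ℝ | ‖φ‖ ≤ 1}).Finite)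
    (f : X → X) (hf_an : ∀ x : X, AnalyticAt ℝ f x)
    (hf : ∀ u v : X, ‖f u - f v‖ ≤ ‖u - v‖)
    (E : Set (X →L[ℝ] ℝ))
    (v w : X)
    (hv : v ∈ {x : X | ∀ φ ∈ E, φ (f x) = φ x})
    (hw : w ∈ {x : X | ∀ φ ∈ E, φ (f x) = φ x})
    (hvw : dualityMap (v - w) = E) :
    (fun z => w + z) '' {x : X | ∀ φ ∈ E, ∀ ψ ∈ E, φ x = ψ x}
      ⊆ {x : X | ∀ φ ∈ E, φ (f x) = φ x} := by
  rintro _ ⟨x, hx, rfl⟩ φ hφ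
  subst hvw
  set m := midpoint ℝ w v
  have hc : ∀ ψ ∈ dualityMap (v - w), ψ (w + x - m) = φ x - ⅟2 * ‖v - w‖ := by
    intro ψ hψ
    have hdir : w + x - m = x - (⅟2 : ℝ) • (v - w) := by rw [← midpoint_sub_left]; abel
    rw [hdir, map_sub, map_smul, smul_eq_mul, hψ.2, hx ψ hψ φ hφ]
  have hline : ∀ g : X → X, (∀ x, AnalyticAt ℝ g x) →
      AnalyticOnNhd ℝ (fun t : ℝ => φ (g (m + t • (w + x - m)))) univ := by
    intro g hg t _
    exact φ.analyticAt _ |>.comp <| (hg _).comp <|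
      analyticAt_const.add (analyticAt_id.smul analyticAt_const)
  have hnear : (fun t : ℝ => φ (f (m + t • (w + x - m))))
      =ᶠ[𝓝 0] fun t => φ (id (m + t • (w + x - m))) := by
    filter_upwards [eventually_norm_sub_add_norm_sub_eq hpoly hc] with t ht
    exact apply_map_eq_apply_of_norm_add_norm_eq hf hφ (hv φ hφ) (hw φ hφ) ht
  simpa using congrFun ((hline f hf_an).eq_of_eventuallyEq
    (hline id fun _ => analyticAt_id) hnear) 1

theorem stmt_6 {X : Type*} [NormedAddCommGroup X] [NormedSpace ℝ X]
    [FiniteDimensional ℝ X]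
    (hpoly : (Set.extremePoints ℝ {φ : X →L[ℝ] ℝ | ‖φ‖ ≤ 1}).Finite)
    (f : X → X) (hf_an : ∀ x : X, AnalyticAt ℝ f x)
    (hf : ∀ u v : X, ‖f u - f v‖ ≤ ‖u - v‖)
    (E : Set (X →L[ℝ] ℝ)) (hE : E ⊆ {φ : X →L[ℝ] ℝ | ‖φ‖ ≤ 1})
    (v w : X)
    (hv : v ∈ {x : X | ∀ φ ∈ E, φ (f x) = φ x})
    (hw : w ∈ {x : X | ∀ φ ∈ E, φ (f x) = φ x})
    (hvw : dualityMap (v - w) = E) :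
    (fun z => w + z) '' {x : X | ∀ φ ∈ E, ∀ ψ ∈ E, φ x = ψ x}
      ⊆ {x : X | ∀ φ ∈ E, φ (f x) = φ x} :=
  stmt_6_general hpoly f hf_an hf E v w hv hw hvw
end

section
/- Let X be a finite-dimensional real normed space, f : X → X nonexpansive with Fix(f) nonempty. Then for every x ∈ X the Krasnoselskii iterates x^{k+1} = (f(x^k) + x^k)/2 converge to a fixed point of f, and the map R(x) = lim_k ((f + id)/2)^k(x) is a nonexpansive retraction of X onto Fix(f). -/
/-!
The averaged map `T = (f + id)/2` is nonexpansive with the same fixed points as `f`, and along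
each orbit the displacement `‖f yₙ - yₙ‖` is nonincreasing. Ishikawa's inequality

  `(1 + n/2) ‖f y - y‖ - 2ⁿ (‖f y - y‖ - ‖f (Tⁿ y) - Tⁿ y‖) ≤ ‖f (Tⁿ y) - y‖`

turns boundedness of an orbit (guaranteed by a fixed point) into asymptotic regularity: the
displacement tends to `0`. In finite dimension a subsequence of the orbit converges; its limit is
then a fixed point, and since the distance of the orbit to any fixed point is nonincreasing, the
whole orbit converges to it. The limit map is a pointwise limit of the nonexpansive maps `Tⁿ`,
hence nonexpansive, and it fixes every fixed point of `f`.
-/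

open Filter Function Topology Set

theorem tendsto_of_antitone_dist_of_tendsto_subseq {α : Type*} [PseudoMetricSpace α]
    {u : ℕ → α} {q : α} {φ : ℕ → ℕ} (hu : Antitone fun n => dist (u n) q)
    (hφ : StrictMono φ) (hlim : Tendsto (u ∘ φ) atTop (𝓝 q)) : Tendsto u atTop (𝓝 q) := by
  rw [tendsto_iff_dist_tendsto_zero] at hlim ⊢
  exact (tendsto_iff_tendsto_subseq_of_antitone hu hφ.tendsto_atTop).2 hlim

section Krasnoselskii

variable {E : Type*} [NormedAddCommGroup E] [NormedSpace ℝ E] {f : E → E}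

noncomputable def krasnoselskiiMap (f : E → E) : E → E := fun z => (2⁻¹ : ℝ) • (f z + z)

local notation "T" => krasnoselskiiMap f

theorem krasnoselskiiMap_sub_self (x : E) : T x - x = (2⁻¹ : ℝ) • (f x - x) := by
  simp only [krasnoselskiiMap]; module

theorem norm_krasnoselskiiMap_sub_self (x : E) : ‖T x - x‖ = ‖f x - x‖ / 2 := by
  rw [krasnoselskiiMap_sub_self, norm_smul]; norm_num; ring

theorem isFixedPt_krasnoselskiiMap_iff {x : E} : IsFixedPt T x ↔ IsFixedPt f x := by
  rw [IsFixedPt, IsFixedPt, ← sub_eq_zero, krasnoselskiiMap_sub_self, smul_eq_zero, sub_eq_zero]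
  norm_num

theorem LipschitzWith.krasnoselskiiMap (hf : LipschitzWith 1 f) : LipschitzWith 1 T := by
  refine lipschitzWith_iff_norm_sub_le.2 fun u v => ?_
  have hfuv : ‖f u - f v‖ ≤ ‖u - v‖ := by simpa using hf.norm_sub_le u v
  calc ‖T u - T v‖ = ‖(2⁻¹ : ℝ) • ((f u - f v) + (u - v))‖ := by
        simp only [_root_.krasnoselskiiMap]; congr 1; module
    _ ≤ 2⁻¹ * (‖f u - f v‖ + ‖u - v‖) := by
        rw [norm_smul]; norm_num; exact norm_add_le _ _
    _ ≤ ↑(1 : NNReal) * ‖u - v‖ := by push_cast; linarith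

theorem norm_sub_self_krasnoselskiiMap_le (hf : LipschitzWith 1 f) (x : E) :
    ‖f (T x) - T x‖ ≤ ‖f x - x‖ :=
  calc ‖f (T x) - T x‖ = ‖(f (T x) - f x) + (T x - x)‖ := by
        simp only [krasnoselskiiMap]; congr 1; module
    _ ≤ ‖T x - x‖ + ‖T x - x‖ := by
        have hfTx : ‖f (T x) - f x‖ ≤ ‖T x - x‖ := by simpa using hf.norm_sub_le (T x) x
        grw [norm_add_le, hfTx]
    _ = ‖f x - x‖ := by rw [norm_krasnoselskiiMap_sub_self]; ring

theorem antitone_norm_sub_self_iterate_krasnoselskiiMap (hf : LipschitzWith 1 f) (x : E) :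
    Antitone fun n => ‖f (T^[n] x) - T^[n] x‖ :=
  antitone_nat_of_succ_le fun n => by
    simpa only [iterate_succ_apply'] using norm_sub_self_krasnoselskiiMap_le hf (T^[n] x)

theorem norm_iterate_krasnoselskiiMap_sub_le (hf : LipschitzWith 1 f) (n : ℕ) (x : E) :
    ‖T^[n] x - x‖ ≤ n / 2 * ‖f x - x‖ := by
  induction n with
  | zero => simp
  | succ n ih =>
    have hstep : ‖T^[n + 1] x - T^[n] x‖ ≤ ‖f x - x‖ / 2 := by
      rw [iterate_succ_apply', norm_krasnoselskiiMap_sub_self]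
      gcongr
      exact antitone_norm_sub_self_iterate_krasnoselskiiMap hf x n.zero_le
    calc ‖T^[n + 1] x - x‖ ≤ ‖T^[n + 1] x - T^[n] x‖ + ‖T^[n] x - x‖ :=
          norm_sub_le_norm_sub_add_norm_sub _ _ _
      _ ≤ (n + 1 : ℕ) / 2 * ‖f x - x‖ := by push_cast; linarith

theorem ishikawa_inequality (hf : LipschitzWith 1 f) (n : ℕ) (x : E) :
    (1 + n / 2) * ‖f x - x‖ - 2 ^ n * (‖f x - x‖ - ‖f (T^[n] x) - T^[n] x‖)
      ≤ ‖f (T^[n] x) - x‖ := by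
  induction n generalizing x with
  | zero => simp
  | succ n ih =>
    set z := T^[n + 1] x
    have hz : T^[n] (T x) = z := (iterate_succ_apply T n x).symm
    have ih := hz ▸ ih (T x)
    -- `x = 2 T x - f x`
    have hid : f z - x = (2 : ℝ) • (f z - T x) - (f z - f x) := by
      simp only [_root_.krasnoselskiiMap]; module
    have hfz : ‖f z - f x‖ ≤ (n + 1 : ℕ) / 2 * ‖f x - x‖ :=
      (show ‖f z - f x‖ ≤ ‖z - x‖ by simpa using hf.norm_sub_le z x).trans
        (norm_iterate_krasnoselskiiMap_sub_le hf _ x)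
    have hmono : ‖f (T x) - T x‖ ≤ ‖f x - x‖ := norm_sub_self_krasnoselskiiMap_le hf x
    have hpow : (n : ℝ) + 2 ≤ 2 ^ (n + 1) := by exact_mod_cast Nat.lt_two_pow_self (n := n + 1)
    have h2 : ‖(2 : ℝ) • (f z - T x)‖ = 2 * ‖f z - T x‖ := by rw [norm_smul]; norm_num
    have htri := hid ▸ norm_sub_norm_le ((2 : ℝ) • (f z - T x)) (f z - f x)
    rw [pow_succ] at hpow ⊢
    push_cast at hfz ⊢
    nlinarith [mul_nonneg (sub_nonneg.2 hpow) (sub_nonneg.2 hmono)]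

theorem tendsto_norm_sub_self_iterate_krasnoselskiiMap (hf : LipschitzWith 1 f) {x : E}
    (hx : Bornology.IsBounded (range fun n => T^[n] x)) :
    Tendsto (fun n => ‖f (T^[n] x) - T^[n] x‖) atTop (𝓝 0) := by
  set d := fun n => ‖f (T^[n] x) - T^[n] x‖
  have hanti : Antitone d := antitone_norm_sub_self_iterate_krasnoselskiiMap hf x
  obtain ⟨A, hd⟩ : ∃ A, Tendsto d atTop (𝓝 A) :=
    ⟨_, tendsto_atTop_ciInf hanti ⟨0, by rintro _ ⟨n, rfl⟩; exact norm_nonneg _⟩⟩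
  obtain ⟨C, hC⟩ := hx.exists_norm_le
  have hbound : ∀ n : ℕ, (1 + n / 2) * A ≤ d 0 + 2 * C := by
    intro n
    -- as `i → ∞`, the left side of Ishikawa's inequality at `T^[i] x` tends to `(1 + n/2) A`
    have hlim : Tendsto (fun i => (1 + n / 2) * d i - 2 ^ n * (d i - d (i + n))) atTop
        (𝓝 ((1 + n / 2) * A - 2 ^ n * (A - A))) :=
      (hd.const_mul _).sub ((hd.sub (hd.comp (tendsto_add_atTop_nat n))).const_mul _)
    rw [sub_self, mul_zero, sub_zero] at hlim
    refine le_of_tendsto' hlim fun i => ?_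
    have hish := ishikawa_inequality hf n (T^[i] x)
    rw [← iterate_add_apply, add_comm n i] at hish
    calc _ ≤ ‖f (T^[i + n] x) - T^[i] x‖ := hish
      _ ≤ d (i + n) + ‖T^[i + n] x‖ + ‖T^[i] x‖ := by
          have := norm_sub_le_norm_sub_add_norm_sub (f (T^[i + n] x)) (T^[i + n] x) (T^[i] x)
          linarith [norm_sub_le (T^[i + n] x) (T^[i] x)]
      _ ≤ d 0 + 2 * C := by
          linarith [hanti (i + n).zero_le, hC _ (mem_range_self (i + n)), hC _ (mem_range_self i)]
  have hA_nonneg : 0 ≤ A := ge_of_tendsto' hd fun n => norm_nonneg _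
  suffices hA : A = 0 from hA ▸ hd
  by_contra hA
  have hA_pos : 0 < A := lt_of_le_of_ne hA_nonneg (Ne.symm hA)
  obtain ⟨n, hn⟩ := exists_nat_gt (2 * (d 0 + 2 * C) / A)
  rw [div_lt_iff₀ hA_pos] at hn
  nlinarith [hbound n]

theorem antitone_dist_iterate_krasnoselskiiMap (hf : LipschitzWith 1 f) {p : E}
    (hp : IsFixedPt f p) (x : E) :
    Antitone fun n => dist (T^[n] x) p :=
  antitone_nat_of_succ_le fun n => by
    simpa [iterate_succ_apply', (isFixedPt_krasnoselskiiMap_iff.2 hp).eq]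
      using hf.krasnoselskiiMap.dist_le_mul (T^[n] x) p

theorem isBounded_range_iterate_krasnoselskiiMap (hf : LipschitzWith 1 f) {p : E}
    (hp : IsFixedPt f p) (x : E) :
    Bornology.IsBounded (range fun n => T^[n] x) :=
  Metric.isBounded_closedBall.subset <| range_subset_iff.2 fun n =>
    Metric.mem_closedBall.2 <| antitone_dist_iterate_krasnoselskiiMap hf hp x n.zero_le

theorem exists_isFixedPt_tendsto_iterate_krasnoselskiiMap [ProperSpace E]
    (hf : LipschitzWith 1 f) {p : E} (hp : IsFixedPt f p) (x : E) :
    ∃ q, IsFixedPt f q ∧ Tendsto (fun n => T^[n] x) atTop (𝓝 q) := by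
  have hbdd := isBounded_range_iterate_krasnoselskiiMap hf hp x
  obtain ⟨q, -, φ, hφ, hq⟩ :=
    tendsto_subseq_of_bounded hbdd (mem_range_self (f := fun n => T^[n] x))
  have hfq : IsFixedPt f q := by
    have hlim : Tendsto (fun n => ‖f (T^[φ n] x) - T^[φ n] x‖) atTop (𝓝 ‖f q - q‖) :=
      (((hf.continuous.tendsto q).comp hq).sub hq).norm
    have hzero := (tendsto_norm_sub_self_iterate_krasnoselskiiMap hf hbdd).comp hφ.tendsto_atTop
    exact sub_eq_zero.1 (norm_eq_zero.1 (tendsto_nhds_unique hlim hzero))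
  exact ⟨q, hfq, tendsto_of_antitone_dist_of_tendsto_subseq
    (antitone_dist_iterate_krasnoselskiiMap hf hfq x) hφ hq⟩

end Krasnoselskii

theorem stmt_9 {X : Type*} [NormedAddCommGroup X] [NormedSpace ℝ X]
    [FiniteDimensional ℝ X]
    (f : X → X) (hf : ∀ u v : X, ‖f u - f v‖ ≤ ‖u - v‖)
    (hne : (Function.fixedPoints f).Nonempty) :
    ∃ R : X → X,
      (∀ x : X, Tendsto (fun k => (fun z => (2⁻¹ : ℝ) • (f z + z))^[k] x)
        atTop (nhds (R x))) ∧
      (∀ x : X, f (R x) = R x) ∧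
      (∀ u v : X, ‖R u - R v‖ ≤ ‖u - v‖) ∧
      Set.range R = Function.fixedPoints f ∧
      (∀ x ∈ Function.fixedPoints f, R x = x) := by
  have hf' : LipschitzWith 1 f :=
    lipschitzWith_iff_norm_sub_le.2 fun u v => by simpa using hf u v
  obtain ⟨p, hp⟩ := hne
  choose R hR_fixed hR_lim using exists_isFixedPt_tendsto_iterate_krasnoselskiiMap hf' hp
  have hR_retract : ∀ x ∈ fixedPoints f, R x = x := fun x hx =>
    tendsto_nhds_unique (hR_lim x) <| by
      simp only [iterate_fixed (isFixedPt_krasnoselskiiMap_iff.2 hx).eq, tendsto_const_nhds]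
  refine ⟨R, hR_lim, hR_fixed, fun u v => ?_, ?_, hR_retract⟩
  · refine le_of_tendsto ((hR_lim u).sub (hR_lim v)).norm (Eventually.of_forall fun n => ?_)
    simpa using (hf'.krasnoselskiiMap.iterate n).norm_sub_le u v
  · exact (range_subset_iff.2 hR_fixed).antisymm fun x hx => ⟨x, hR_retract x hx⟩
end

section
/- For n ≥ 3, Landau's function satisfies g(n) ≤ e^{n/e} < 2^{n−1}, where g(n) is the maximum order of an element of the symmetric group Sₙ. -/
/-- Landau's function: the maximum order of a permutation on `n` letters. -/
noncomputable def landau (n : ℕ) : ℕ :=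
  Finset.univ.sup fun π : Equiv.Perm (Fin n) => orderOf π

lemma nat_le_exp_div_e (a : ℕ) : (a : ℝ) ≤ Real.exp (a / Real.exp 1) := by
  rcases Nat.eq_zero_or_pos a with h | h
  · simp [h]
  · have hx : (0:ℝ) < a := by exact_mod_cast h
    have hlog := Real.log_le_sub_one_of_pos (x := a / Real.exp 1)
      (by positivity)
    rw [Real.log_div (ne_of_gt hx) (Real.exp_ne_zero 1), Real.log_exp] at hlog
    have hle : Real.log a ≤ (a : ℝ) / Real.exp 1 := by linarith
    calc (a:ℝ) = Real.exp (Real.log a) := (Real.exp_log hx).symm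
    _ ≤ _ := Real.exp_le_exp.2 hle

lemma prod_le_exp_sum (s : Multiset ℕ) :
    (s.prod : ℝ) ≤ Real.exp (s.sum / Real.exp 1) := by
  induction s using Multiset.induction with
  | empty => simp
  | cons a s ih =>
    rw [Multiset.prod_cons, Multiset.sum_cons, Nat.cast_mul, Nat.cast_add]
    have h1 := nat_le_exp_div_e a
    have h2 : Real.exp (((a:ℝ) + s.sum) / Real.exp 1)
        = Real.exp (a / Real.exp 1) * Real.exp (s.sum / Real.exp 1) := by
      rw [← Real.exp_add]; ring_nf
    rw [h2]
    exact mul_le_mul h1 ih (by positivity) (Real.exp_pos _).le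

lemma lcm_dvd_prod' (s : Multiset ℕ) : s.lcm ∣ s.prod := by
  induction s using Multiset.induction with
  | empty => simp
  | cons a s ih =>
    rw [Multiset.lcm_cons, Multiset.prod_cons]
    exact lcm_dvd (dvd_mul_right _ _) (ih.trans (dvd_mul_left _ _))

theorem stmt_16 (n : ℕ) (hn : 3 ≤ n) :
    (landau n : ℝ) ≤ Real.exp (n / Real.exp 1) ∧
    Real.exp (n / Real.exp 1) < 2 ^ (n - 1) := by
  constructor
  · -- landau n ≤ e^(n/e)
    obtain ⟨π, -, hπ⟩ := Finset.exists_mem_eq_sup (Finset.univ : Finset (Equiv.Perm (Fin n)))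
      ⟨1, Finset.mem_univ 1⟩ (fun π => orderOf π)
    have hland : landau n = orderOf π := hπ
    rw [hland]
    have hlcm : π.cycleType.lcm = orderOf π := Equiv.Perm.lcm_cycleType π
    have hdvd : orderOf π ∣ π.cycleType.prod := hlcm ▸ lcm_dvd_prod' _
    have hpos : 0 < π.cycleType.prod := by
      apply Multiset.prod_pos
      intro a ha
      exact lt_of_lt_of_le (by norm_num) (Equiv.Perm.two_le_of_mem_cycleType ha)
    have h1 : (orderOf π : ℝ) ≤ (π.cycleType.prod : ℝ) := by
      exact_mod_cast Nat.le_of_dvd hpos hdvd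
    have h2 := prod_le_exp_sum π.cycleType
    have h3 : (π.cycleType.sum : ℝ) ≤ n := by
      have := π.sum_cycleType
      have hcard : π.support.card ≤ n := by
        simpa using π.support.card_le_univ
      exact_mod_cast this ▸ hcard
    have h4 : Real.exp (π.cycleType.sum / Real.exp 1) ≤ Real.exp (n / Real.exp 1) := by
      gcongr
    linarith
  · -- e^(n/e) < 2^(n-1)
    have he : (2.7182818283 : ℝ) < Real.exp 1 := Real.exp_one_gt_d9
    have hl : (0.6931471803 : ℝ) < Real.log 2 := Real.log_two_gt_d9
    have hn' : (3:ℝ) ≤ n := by exact_mod_cast hn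
    have hkey : (n:ℝ) / Real.exp 1 < (n - 1 : ℕ) * Real.log 2 := by
      have hcast : ((n - 1 : ℕ) : ℝ) = (n:ℝ) - 1 := by
        have : 1 ≤ n := by omega
        push_cast [this]; ring
      rw [hcast]
      have h5 : (n:ℝ) / Real.exp 1 < n / 2.7182818283 := by
        apply div_lt_div_of_pos_left (by linarith) (by norm_num) he
      have h6 : (n:ℝ) / 2.7182818283 < ((n:ℝ) - 1) * 0.6931471803 := by
        rw [div_lt_iff₀ (by norm_num)]
        nlinarith
      nlinarith
    calc Real.exp ((n:ℝ) / Real.exp 1) < Real.exp ((n - 1 : ℕ) * Real.log 2) :=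
          Real.exp_lt_exp.2 hkey
      _ = 2 ^ (n - 1) := by
          rw [Real.exp_nat_mul, Real.exp_log (by norm_num)]
end

section
/- Let I₁,…,I_m be a partition of {1,…,n} and for each k let v_k ∈ ℝⁿ be a vector supported on I_k with all entries in {−1, 0, 1} and either v_k = 0 or |（v_k)_i| = 1 for all i ∈ I_k. Then the map P(x) = Σ_k (1/|I_k|) v_k (v_kᵀ x) is a linear projection on ℝⁿ that is nonexpansive with respect to the ∞-norm. -/
/-- Here `Fin n → ℝ` carries the sup (∞-) norm. -/
theorem stmt_18 {n m : ℕ} (I : Fin m → Finset (Fin n))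
    (hdisj : ∀ k l : Fin m, k ≠ l → Disjoint (I k) (I l))
    (hcover : ∀ i : Fin n, ∃ k : Fin m, i ∈ I k)
    (v : Fin m → (Fin n → ℝ))
    (hsupp : ∀ k : Fin m, ∀ i : Fin n, i ∉ I k → v k i = 0)
    (hval : ∀ k : Fin m, v k = 0 ∨ ∀ i ∈ I k, |v k i| = 1)
    (P : (Fin n → ℝ) → (Fin n → ℝ))
    (hP : ∀ x, P x = ∑ k : Fin m, ((I k).card : ℝ)⁻¹ • ((∑ i : Fin n, v k i * x i) • v k)) :
    IsLinearMap ℝ P ∧ P ∘ P = P ∧ ∀ x, ‖P x‖ ≤ ‖x‖ := by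
  have key : ∀ x (i : Fin n),
      P x i = ∑ k : Fin m, ((I k).card : ℝ)⁻¹ * ((∑ j : Fin n, v k j * x j) * v k i) := by
    intro x i
    rw [hP]
    simp [Finset.sum_apply, mul_assoc]
  have horth : ∀ k l : Fin m, k ≠ l → ∑ j : Fin n, v k j * v l j = 0 := by
    intro k l hkl
    apply Finset.sum_eq_zero
    intro j _
    by_cases hj : j ∈ I k
    · have hjl : j ∉ I l := Finset.disjoint_left.mp (hdisj k l hkl) hj
      rw [hsupp l j hjl, mul_zero]
    · rw [hsupp k j hj, zero_mul]
  have hself : ∀ k : Fin m, v k ≠ 0 → ∑ j : Fin n, v k j * v k j = ((I k).card : ℝ) := by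
    intro k hk
    rcases hval k with h | h
    · exact absurd h hk
    rw [← Finset.sum_subset (Finset.subset_univ (I k))
        (fun j _ hj => by rw [hsupp k j hj, zero_mul])]
    have : ∀ j ∈ I k, v k j * v k j = 1 := by
      intro j hj
      have h1 := h j hj
      nlinarith [abs_mul_abs_self (v k j)]
    rw [Finset.sum_congr rfl this, Finset.sum_const, nsmul_eq_mul, mul_one]
  have hcard : ∀ k : Fin m, v k ≠ 0 → ((I k).card : ℝ) ≠ 0 := by
    intro k hk
    obtain ⟨j, hj⟩ := Function.ne_iff.mp hk
    have hjk : j ∈ I k := by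
      by_contra h; exact hj (hsupp k j h)
    exact_mod_cast Finset.card_ne_zero_of_mem hjk
  have hdot : ∀ x (k : Fin m), ∑ j : Fin n, v k j * P x j = ∑ j : Fin n, v k j * x j := by
    intro x k
    by_cases hk : v k = 0
    · simp [hk]
    calc ∑ j : Fin n, v k j * P x j
        = ∑ j : Fin n, ∑ l : Fin m,
            ((I l).card : ℝ)⁻¹ * ((∑ i : Fin n, v l i * x i) * (v k j * v l j)) := by
          refine Finset.sum_congr rfl fun j _ => ?_
          rw [key, Finset.mul_sum]
          exact Finset.sum_congr rfl fun l _ => by ring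
      _ = ∑ l : Fin m,
            ((I l).card : ℝ)⁻¹ * ((∑ i : Fin n, v l i * x i) * ∑ j : Fin n, v k j * v l j) := by
          rw [Finset.sum_comm]
          refine Finset.sum_congr rfl fun l _ => ?_
          rw [Finset.mul_sum, Finset.mul_sum]
      _ = ∑ j : Fin n, v k j * x j := by
          rw [Finset.sum_eq_single k]
          · rw [hself k hk, mul_comm, mul_assoc, mul_inv_cancel₀ (hcard k hk), mul_one]
          · intro l _ hlk
            rw [horth k l fun h => hlk h.symm, mul_zero, mul_zero]
          · intro h; exact absurd (Finset.mem_univ k) h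
  refine ⟨⟨?_, ?_⟩, ?_, ?_⟩
  · intro x y
    funext i
    simp only [key, Pi.add_apply]
    rw [← Finset.sum_add_distrib]
    refine Finset.sum_congr rfl fun k _ => ?_
    have : (∑ j : Fin n, v k j * (x j + y j))
        = (∑ j : Fin n, v k j * x j) + ∑ j : Fin n, v k j * y j := by
      rw [← Finset.sum_add_distrib]
      exact Finset.sum_congr rfl fun j _ => mul_add _ _ _
    rw [this]; ring
  · intro c x
    funext i
    simp only [key, Pi.smul_apply, smul_eq_mul, Finset.mul_sum]
    refine Finset.sum_congr rfl fun k _ => ?_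
    have : (∑ j : Fin n, v k j * (c * x j)) = c * ∑ j : Fin n, v k j * x j := by
      rw [Finset.mul_sum]
      exact Finset.sum_congr rfl fun j _ => by ring
    rw [this]; ring
  · funext x
    show P (P x) = P x
    rw [hP (P x)]
    conv_rhs => rw [hP x]
    refine Finset.sum_congr rfl fun k _ => ?_
    rw [hdot]
  · intro x
    rw [pi_norm_le_iff_of_nonneg (norm_nonneg x)]
    intro i
    obtain ⟨k, hik⟩ := hcover i
    have hPxi : P x i = ((I k).card : ℝ)⁻¹ * ((∑ j : Fin n, v k j * x j) * v k i) := by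
      rw [key]
      apply Finset.sum_eq_single k
      · intro l _ hlk
        have hil : i ∉ I l := Finset.disjoint_right.mp (hdisj l k hlk) hik
        rw [hsupp l i hil, mul_zero, mul_zero]
      · intro h; exact absurd (Finset.mem_univ k) h
    rw [hPxi, Real.norm_eq_abs]
    rcases hval k with h0 | h1
    · simp [h0]
    have hxj : ∀ j : Fin n, |x j| ≤ ‖x‖ := fun j => by
      rw [← Real.norm_eq_abs]; exact norm_le_pi_norm x j
    have hvabs : ∑ j : Fin n, |v k j| = ((I k).card : ℝ) := by
      rw [← Finset.sum_subset (Finset.subset_univ (I k))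
          (fun j _ hj => by rw [hsupp k j hj, abs_zero])]
      rw [Finset.sum_congr rfl h1, Finset.sum_const, nsmul_eq_mul, mul_one]
    have habs : |∑ j : Fin n, v k j * x j| ≤ ((I k).card : ℝ) * ‖x‖ := by
      calc |∑ j : Fin n, v k j * x j| ≤ ∑ j : Fin n, |v k j * x j| :=
            Finset.abs_sum_le_sum_abs _ _
        _ ≤ ∑ j : Fin n, |v k j| * ‖x‖ := by
            refine Finset.sum_le_sum fun j _ => ?_
            rw [abs_mul]
            exact mul_le_mul_of_nonneg_left (hxj j) (abs_nonneg _)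
        _ = ((I k).card : ℝ) * ‖x‖ := by rw [← Finset.sum_mul, hvabs]
    have hcpos : (0 : ℝ) < ((I k).card : ℝ) :=
      Nat.cast_pos.mpr (Finset.card_pos.mpr ⟨i, hik⟩)
    have hvi : |v k i| = 1 := h1 i hik
    calc |((I k).card : ℝ)⁻¹ * ((∑ j : Fin n, v k j * x j) * v k i)|
        = ((I k).card : ℝ)⁻¹ * (|∑ j : Fin n, v k j * x j| * |v k i|) := by
          rw [abs_mul, abs_mul, abs_of_nonneg (inv_nonneg.mpr hcpos.le)]
      _ = ((I k).card : ℝ)⁻¹ * |∑ j : Fin n, v k j * x j| := by rw [hvi, mul_one]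
      _ ≤ ((I k).card : ℝ)⁻¹ * (((I k).card : ℝ) * ‖x‖) :=
          mul_le_mul_of_nonneg_left habs (inv_nonneg.mpr hcpos.le)
      _ = ‖x‖ := by field_simp
end
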